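/- arXiv:2309.07443 — 2 statements merged into one kernel-verified Lean document; each statement's English description precedes it below -/
import Mathlib

section
/- Let n be a positive integer, λ > 0, ε ≥ 0, and 0 < m̲ ≤ m̄. Let M : [0,∞) → (n×n real symmetric matrices) be differentiable with m̲I ⪯ M(t) ⪯ m̄I for all t, let 𝒜 : [0,∞) → ℝ^{n×n} satisfy M(t)𝒜(t) + 𝒜(t)ᵀM(t) + M'(t) ⪯ −2λ·M(t) for all t, and let δ : [0,∞) → ℝ^n be differentiable with δ'(t) = 𝒜(t)δ(t) + d(t) where ‖d(t)‖ ≤ ε for all t. Then for every t ≥ 0, ‖δ(t)‖ ≤ √(m̄/m̲)·( e^{−λt}‖δ(0)‖ + ε/λ ). -/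
/-!
Along the error dynamics the Lyapunov function `V = δᵀ M δ` satisfies
`V' ≤ -2λ V + 2 δᵀ M d ≤ -2λ V + 2 √m̄ ε √V`, by the contraction inequality and Cauchy–Schwarz
for the form `M`. Hence `√V` obeys the linear differential inequality `(√V)' ≤ -λ √V + √m̄ ε`,
and Grönwall gives `√V(t) ≤ e^{-λt} √V(0) + √m̄ ε / λ`. The sandwich `m̲ ‖δ‖² ≤ V ≤ m̄ ‖δ‖²`
converts this into the bound on `‖δ‖`.
-/

open Matrix Set

noncomputable def euclNorm {ι : Type*} [Fintype ι] (v : ι → ℝ) : ℝ := Real.sqrt (v ⬝ᵥ v)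

namespace Matrix

variable {ι : Type*} [Fintype ι]

lemma PosSemidef.dotProduct_mulVec_le_sqrt_mul_sqrt {Q : Matrix ι ι ℝ} (hQ : Q.PosSemidef)
    (x y : ι → ℝ) : x ⬝ᵥ Q *ᵥ y ≤ √(x ⬝ᵥ Q *ᵥ x) * √(y ⬝ᵥ Q *ᵥ y) := by
  classical
  have hnonneg (z : ι → ℝ) : 0 ≤ Q.toBilin' z z := by
    simpa [toBilin'_apply'] using hQ.dotProduct_mulVec_nonneg z
  have hsymm : LinearMap.IsSymm Q.toBilin' := LinearMap.BilinForm.isSymm_iff.1 <|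
    isSymm_toBilin'_iff_isSymm.2 (isHermitian_iff_isSymm.1 hQ.isHermitian)
  have hcs := Q.toBilin'.apply_sq_le_of_symm hnonneg hsymm x y
  simp only [toBilin'_apply'] at hcs
  rw [← Real.sqrt_mul (by simpa using hQ.dotProduct_mulVec_nonneg x)]
  exact (le_abs_self _).trans (Real.abs_le_sqrt hcs)

lemma mul_dotProduct_self_le_dotProduct_mulVec [DecidableEq ι] {M : Matrix ι ι ℝ} {m : ℝ}
    (h : (M - m • 1).PosSemidef) (x : ι → ℝ) : m * (x ⬝ᵥ x) ≤ x ⬝ᵥ M *ᵥ x := by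
  simpa only [star_trivial, sub_mulVec, dotProduct_sub, smul_mulVec, one_mulVec,
    dotProduct_smul, smul_eq_mul, sub_nonneg] using h.dotProduct_mulVec_nonneg x

lemma dotProduct_mulVec_le_mul_dotProduct_self [DecidableEq ι] {M : Matrix ι ι ℝ} {m : ℝ}
    (h : (m • 1 - M).PosSemidef) (x : ι → ℝ) : x ⬝ᵥ M *ᵥ x ≤ m * (x ⬝ᵥ x) := by
  simpa only [star_trivial, sub_mulVec, dotProduct_sub, smul_mulVec, one_mulVec,
    dotProduct_smul, smul_eq_mul, sub_nonneg] using h.dotProduct_mulVec_nonneg x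

lemma lyapunov_derivative_le {M A M' : Matrix ι ι ℝ} {lam : ℝ} (hM : M.IsSymm)
    (hcontr : ((-(2 * lam)) • M - (M * A + Aᵀ * M + M')).PosSemidef) (x d : ι → ℝ) :
    (A *ᵥ x + d) ⬝ᵥ M *ᵥ x + x ⬝ᵥ (M' *ᵥ x + M *ᵥ (A *ᵥ x + d)) ≤
      -(2 * lam) * (x ⬝ᵥ M *ᵥ x) + 2 * (x ⬝ᵥ M *ᵥ d) := by
  have hq := hcontr.dotProduct_mulVec_nonneg x
  have hAtM : x ⬝ᵥ Aᵀ *ᵥ M *ᵥ x = (A *ᵥ x) ⬝ᵥ M *ᵥ x := by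
    rw [dotProduct_mulVec, vecMul_transpose]
  have hdM : d ⬝ᵥ M *ᵥ x = x ⬝ᵥ M *ᵥ d := by
    rw [dotProduct_mulVec, ← mulVec_transpose, hM.eq, dotProduct_comm]
  simp only [star_trivial, sub_mulVec, smul_mulVec, add_mulVec, dotProduct_sub, dotProduct_add,
    dotProduct_smul, smul_eq_mul, ← mulVec_mulVec, hAtM] at hq
  simp only [add_dotProduct, dotProduct_add, mulVec_add, hdM]
  linarith

lemma dotProduct_mulVec_le_sqrt_mul_euclNorm [DecidableEq ι] {M : Matrix ι ι ℝ} {m : ℝ}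
    (hM : M.PosSemidef) (hMm : (m • 1 - M).PosSemidef) (x d : ι → ℝ) :
    x ⬝ᵥ M *ᵥ d ≤ √(x ⬝ᵥ M *ᵥ x) * (√m * euclNorm d) := by
  have hd : √(d ⬝ᵥ M *ᵥ d) ≤ √m * euclNorm d := by
    rw [euclNorm, ← Real.sqrt_mul' _ (by simpa using dotProduct_star_self_nonneg d)]
    exact Real.sqrt_le_sqrt (dotProduct_mulVec_le_mul_dotProduct_self hMm d)
  exact (hM.dotProduct_mulVec_le_sqrt_mul_sqrt x d).trans
    (mul_le_mul_of_nonneg_left hd (Real.sqrt_nonneg _))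

end Matrix

section Deriv

variable {ι : Type*} [Fintype ι] {u v : ℝ → ι → ℝ} {u' v' : ι → ℝ} {s : Set ℝ} {t : ℝ}

lemma HasDerivWithinAt.dotProduct (hu : HasDerivWithinAt u u' s t)
    (hv : HasDerivWithinAt v v' s t) :
    HasDerivWithinAt (fun r => u r ⬝ᵥ v r) (u' ⬝ᵥ v t + u t ⬝ᵥ v') s t := by
  unfold _root_.dotProduct
  simp only [← Finset.sum_add_distrib]
  exact HasDerivWithinAt.fun_sum fun i _ =>
    (hasDerivWithinAt_pi.1 hu i).mul (hasDerivWithinAt_pi.1 hv i)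

lemma HasDerivWithinAt.mulVec {A : ℝ → Matrix ι ι ℝ} {A' : Matrix ι ι ℝ}
    (hA : ∀ i j, HasDerivWithinAt (fun r => A r i j) (A' i j) s t)
    (hv : HasDerivWithinAt v v' s t) :
    HasDerivWithinAt (fun r => A r *ᵥ v r) (A' *ᵥ v t + A t *ᵥ v') s t :=
  hasDerivWithinAt_pi.2 fun i => (hasDerivWithinAt_pi.2 (hA i)).dotProduct hv

end Deriv

lemma le_exp_mul_add_div_of_hasDerivWithinAt_le {f f' : ℝ → ℝ} {lam B : ℝ} (hlam : 0 < lam)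
    (hB : 0 ≤ B) (hf : ∀ t, 0 ≤ t → HasDerivWithinAt f (f' t) (Ici 0) t)
    (hf' : ∀ t, 0 ≤ t → f' t ≤ -lam * f t + B) {T : ℝ} (hT : 0 ≤ T) :
    f T ≤ Real.exp (-lam * T) * f 0 + B / lam := by
  have hcont : ContinuousOn f (Icc 0 T) := fun t ht =>
    (hf t ht.1).continuousWithinAt.mono Icc_subset_Ici_self
  have hgron := le_gronwallBound_of_liminf_deriv_right_le hcont
    (fun t ht r hr => ((hf t ht.1).mono (Ici_subset_Ici.2 ht.1)).liminf_right_slope_le hr)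
    le_rfl (fun t ht => hf' t ht.1) T ⟨hT, le_rfl⟩
  rw [gronwallBound_of_K_ne_0 (neg_ne_zero.2 hlam.ne'), sub_zero] at hgron
  have hdecay : 0 ≤ B / lam * Real.exp (-lam * T) := by positivity
  calc f T ≤ f 0 * Real.exp (-lam * T) + B / -lam * (Real.exp (-lam * T) - 1) := hgron
    _ = Real.exp (-lam * T) * f 0 + B / lam - B / lam * Real.exp (-lam * T) := by
      rw [div_neg]; ring
    _ ≤ Real.exp (-lam * T) * f 0 + B / lam := by linarith

lemma div_two_sqrt_add_le {v v' lam A η : ℝ} (hlam : 0 ≤ lam) (hA : 0 ≤ A) (hv : 0 ≤ v)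
    (hη : 0 < η) (hv' : v' ≤ -(2 * lam) * v + 2 * A * √v) :
    v' / (2 * √(v + η)) ≤ -lam * √(v + η) + (A + lam * √η) := by
  have hg : 0 < √(v + η) := Real.sqrt_pos.2 (by linarith)
  have hv_sq : √v * √v = v := Real.mul_self_sqrt hv
  have hg_sq : √(v + η) * √(v + η) = v + η := Real.mul_self_sqrt (by linarith)
  have hη_sq : √η * √η = η := Real.mul_self_sqrt hη.le
  have hvg : √v ≤ √(v + η) := Real.sqrt_le_sqrt (by linarith)
  have hηg : √η ≤ √(v + η) := Real.sqrt_le_sqrt (by linarith)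
  rw [div_le_iff₀ (by positivity)]
  -- `2λ(√(v+η)² - v) = 2λη ≤ 2λ√η √(v+η)` and `√v ≤ √(v+η)`
  nlinarith [mul_le_mul_of_nonneg_left hvg hA,
    mul_nonneg hlam (mul_nonneg (Real.sqrt_nonneg η) (sub_nonneg.2 hηg))]

lemma sqrt_le_exp_mul_sqrt_add_div_of_hasDerivWithinAt_le {V V' : ℝ → ℝ} {lam A : ℝ}
    (hlam : 0 < lam) (hA : 0 ≤ A) (hV : ∀ t, 0 ≤ t → 0 ≤ V t)
    (hV' : ∀ t, 0 ≤ t → HasDerivWithinAt V (V' t) (Ici 0) t)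
    (hrate : ∀ t, 0 ≤ t → V' t ≤ -(2 * lam) * V t + 2 * A * √(V t)) {T : ℝ} (hT : 0 ≤ T) :
    √(V T) ≤ Real.exp (-lam * T) * √(V 0) + A / lam := by
  -- `√V` need not be differentiable where `V = 0`, so run Grönwall on `√(V + η)` and let `η → 0`.
  have hreg : ∀ η > 0, √(V T) ≤ Real.exp (-lam * T) * √(V 0 + η) + (A + lam * √η) / lam := by
    intro η hη
    have hderiv : ∀ t, 0 ≤ t → HasDerivWithinAt (fun s => √(V s + η))
        (V' t / (2 * √(V t + η))) (Ici 0) t := fun t ht =>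
      ((hV' t ht).add_const η).sqrt (by linarith [hV t ht])
    calc √(V T) ≤ √(V T + η) := Real.sqrt_le_sqrt (by linarith)
      _ ≤ _ := le_exp_mul_add_div_of_hasDerivWithinAt_le hlam (by positivity) hderiv
          (fun t ht => div_two_sqrt_add_le hlam.le hA (hV t ht) hη (hrate t ht)) hT
  have hlim : Filter.Tendsto (fun η => Real.exp (-lam * T) * √(V 0 + η) + (A + lam * √η) / lam)
      (nhdsWithin 0 (Ioi 0)) (nhds (Real.exp (-lam * T) * √(V 0) + A / lam)) := by
    exact (Continuous.tendsto' (by fun_prop) 0 _ (by simp)).mono_left nhdsWithin_le_nhds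
  exact ge_of_tendsto hlim (eventually_nhdsWithin_of_forall hreg)

theorem ccm_tube_bound_general
    (n : ℕ) (lam ε mlo mhi : ℝ)
    (hlam : 0 < lam) (hε : 0 ≤ ε) (hmlo : 0 < mlo)
    (M M' : ℝ → Matrix (Fin n) (Fin n) ℝ)
    (hMderiv : ∀ t, 0 ≤ t → ∀ i j,
      HasDerivWithinAt (fun s => M s i j) (M' t i j) (Set.Ici (0 : ℝ)) t)
    (hMlo : ∀ t, 0 ≤ t → (M t - mlo • (1 : Matrix (Fin n) (Fin n) ℝ)).PosSemidef)
    (hMhi : ∀ t, 0 ≤ t → (mhi • (1 : Matrix (Fin n) (Fin n) ℝ) - M t).PosSemidef)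
    (𝒜 : ℝ → Matrix (Fin n) (Fin n) ℝ)
    (hcontr : ∀ t, 0 ≤ t →
      ((-(2 * lam)) • M t - (M t * 𝒜 t + (𝒜 t)ᵀ * M t + M' t)).PosSemidef)
    (δ d : ℝ → Fin n → ℝ)
    (hd : ∀ t, 0 ≤ t → euclNorm (d t) ≤ ε)
    (hδ : ∀ t, 0 ≤ t → HasDerivWithinAt δ (𝒜 t *ᵥ δ t + d t) (Set.Ici (0 : ℝ)) t) :
    ∀ t, 0 ≤ t →
      euclNorm (δ t) ≤
        Real.sqrt (mhi / mlo) * (Real.exp (-lam * t) * euclNorm (δ 0) + ε / lam) := by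
  intro T hT
  have hMpsd (t : ℝ) (ht : 0 ≤ t) : (M t).PosSemidef := by
    simpa using (hMlo t ht).add (PosSemidef.one.smul hmlo.le)
  let V t := δ t ⬝ᵥ M t *ᵥ δ t
  have hV (t : ℝ) (ht : 0 ≤ t) := (hδ t ht).dotProduct (.mulVec (hMderiv t ht) (hδ t ht))
  have hrate (t : ℝ) (ht : 0 ≤ t) :
      (𝒜 t *ᵥ δ t + d t) ⬝ᵥ M t *ᵥ δ t + δ t ⬝ᵥ (M' t *ᵥ δ t + M t *ᵥ (𝒜 t *ᵥ δ t + d t)) ≤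
        -(2 * lam) * V t + 2 * (√mhi * ε) * √(V t) := by
    have hdist := dotProduct_mulVec_le_sqrt_mul_euclNorm (hMpsd t ht) (hMhi t ht) (δ t) (d t)
    have hdist_ε : √(V t) * (√mhi * euclNorm (d t)) ≤ √(V t) * (√mhi * ε) := by
      gcongr; exact hd t ht
    linarith [lyapunov_derivative_le (isHermitian_iff_isSymm.1 (hMpsd t ht).isHermitian)
      (hcontr t ht) (δ t) (d t)]
  have hsqrtV : √(V T) ≤ Real.exp (-lam * T) * √(V 0) + √mhi * ε / lam :=
    sqrt_le_exp_mul_sqrt_add_div_of_hasDerivWithinAt_le hlam (by positivity)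
      (fun t ht => by simpa using (hMpsd t ht).dotProduct_mulVec_nonneg (δ t)) hV hrate hT
  have hlo : √mlo * euclNorm (δ T) ≤ √(V T) := by
    rw [euclNorm, ← Real.sqrt_mul hmlo.le]
    exact Real.sqrt_le_sqrt (mul_dotProduct_self_le_dotProduct_mulVec (hMlo T hT) _)
  have hhi : √(V 0) ≤ √mhi * euclNorm (δ 0) := by
    rw [euclNorm, ← Real.sqrt_mul' _ (by simpa using dotProduct_star_self_nonneg (δ 0))]
    exact Real.sqrt_le_sqrt (dotProduct_mulVec_le_mul_dotProduct_self (hMhi 0 le_rfl) _)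
  rw [Real.sqrt_div' _ hmlo.le, div_mul_eq_mul_div, le_div_iff₀ (Real.sqrt_pos.2 hmlo)]
  calc euclNorm (δ T) * √mlo = √mlo * euclNorm (δ T) := mul_comm _ _
    _ ≤ Real.exp (-lam * T) * √(V 0) + √mhi * ε / lam := hlo.trans hsqrtV
    _ ≤ Real.exp (-lam * T) * (√mhi * euclNorm (δ 0)) + √mhi * ε / lam := by gcongr
    _ = √mhi * (Real.exp (-lam * T) * euclNorm (δ 0) + ε / lam) := by ring

/-- CCM tube-size bound: contraction of the metric `M` at rate `λ`
(`M𝒜 + 𝒜ᵀM + M' ⪯ -2λM`, with `m̲I ⪯ M ⪯ m̄I`) plus a norm-bounded additive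
disturbance `‖d(t)‖ ≤ ε` yields `‖δ(t)‖ ≤ √(m̄/m̲)(e^{-λt}‖δ(0)‖ + ε/λ)`. -/
theorem ccm_tube_bound
    (n : ℕ) (hn : 0 < n) (lam ε mlo mhi : ℝ)
    (hlam : 0 < lam) (hε : 0 ≤ ε) (hmlo : 0 < mlo) (hm : mlo ≤ mhi)
    (M M' : ℝ → Matrix (Fin n) (Fin n) ℝ)
    (hMsymm : ∀ t, 0 ≤ t → (M t).IsSymm)
    (hMderiv : ∀ t, 0 ≤ t → ∀ i j,
      HasDerivWithinAt (fun s => M s i j) (M' t i j) (Set.Ici (0 : ℝ)) t)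
    (hMlo : ∀ t, 0 ≤ t → (M t - mlo • (1 : Matrix (Fin n) (Fin n) ℝ)).PosSemidef)
    (hMhi : ∀ t, 0 ≤ t → (mhi • (1 : Matrix (Fin n) (Fin n) ℝ) - M t).PosSemidef)
    (𝒜 : ℝ → Matrix (Fin n) (Fin n) ℝ)
    (hcontr : ∀ t, 0 ≤ t →
      ((-(2 * lam)) • M t - (M t * 𝒜 t + (𝒜 t)ᵀ * M t + M' t)).PosSemidef)
    (δ d : ℝ → Fin n → ℝ)
    (hd : ∀ t, 0 ≤ t → euclNorm (d t) ≤ ε)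
    (hδ : ∀ t, 0 ≤ t → HasDerivWithinAt δ (𝒜 t *ᵥ δ t + d t) (Set.Ici (0 : ℝ)) t) :
    ∀ t, 0 ≤ t →
      euclNorm (δ t) ≤
        Real.sqrt (mhi / mlo) * (Real.exp (-lam * t) * euclNorm (δ 0) + ε / lam) :=
  ccm_tube_bound_general n lam ε mlo mhi hlam hε hmlo M M' hMderiv hMlo hMhi 𝒜 hcontr δ d hd hδ
end

section
/- Let E be a real normed vector space and S ⊆ E. Let λ > 0 and α > μ > 0. Let M : E → (n×n real symmetric matrices) be Lipschitz on S with constant L_M, let C ∈ ℝ^{p×n} and D ∈ ℝ^{p×m} be fixed matrices with ‖C‖ ≤ S_C, ‖D‖ ≤ S_D (spectral norm), and let K : E → ℝ^{m×n} be Lipschitz on S with constant L_K and ‖K(s)‖ ≤ S_K on S. Define G(s) := [[λ·M(s) − α⁻¹·(C + D·K(s))ᵀ(C + D·K(s)), 0],[0, (α−μ)·I_l]] (a symmetric block-diagonal matrix). Then the function s ↦ λ_max(G(s)) is Lipschitz on S with constant λ·L_M + (2/α)·S_C S_D L_K + (4/α)·S_K S_D² L_K. -/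
open Matrix Set

/-- Spectral (ℓ²-operator) norm of a real matrix. -/
noncomputable def specNorm {ι κ : Type*} [Fintype ι] [Fintype κ] [DecidableEq κ]
    (A : Matrix ι κ ℝ) : ℝ :=
  ‖LinearMap.toContinuousLinearMap (Matrix.toEuclideanLin A)‖

/-- Largest eigenvalue of a real symmetric matrix, as the supremum of the
Rayleigh quotient over the unit sphere. -/
noncomputable def lambdaMax {ι : Type*} [Fintype ι] (A : Matrix ι ι ℝ) : ℝ :=
  sSup {r : ℝ | ∃ v : ι → ℝ, euclNorm v = 1 ∧ r = v ⬝ᵥ (A *ᵥ v)}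

/-!
The largest eigenvalue is `1`-Lipschitz for the spectral norm, since each Rayleigh quotient of `A`
is within `‖A - B‖` of the same Rayleigh quotient of `B`. In `G s - G t` the constant block
cancels, leaving `λ (M s - M t) - α⁻¹ (N sᵀ N s - N tᵀ N t)` with `N = C + D K`. Writing
`Nᵀ N - N'ᵀ N' = Nᵀ (N - N') + (N - N')ᵀ N'` with `‖N‖ ≤ S_C + S_D S_K` and
`‖N s - N t‖ ≤ S_D L_K ‖s - t‖` bounds the second term by `(2/α) (S_C + S_D S_K) S_D L_K ‖s - t‖`,
which is at most the stated constant.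
-/

open scoped Matrix.Norms.L2Operator

section EuclideanNorm

variable {ι κ : Type*} [Fintype ι] [Fintype κ]

lemma euclNorm_eq_norm_toLp (v : ι → ℝ) :
    euclNorm v = ‖(WithLp.toLp 2 v : EuclideanSpace ℝ ι)‖ := by
  simp [euclNorm, EuclideanSpace.norm_eq, dotProduct, sq]

lemma euclNorm_single [DecidableEq ι] (i : ι) : euclNorm (Pi.single i 1 : ι → ℝ) = 1 := by
  simp [euclNorm_eq_norm_toLp]

lemma euclNorm_sumElim_zero (v : ι → ℝ) : euclNorm (Sum.elim v (0 : κ → ℝ)) = euclNorm v := by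
  simp [euclNorm, dotProduct, Fintype.sum_sum_type]

lemma euclNorm_comp_inl_le (v : ι ⊕ κ → ℝ) : euclNorm (v ∘ Sum.inl) ≤ euclNorm v := by
  unfold euclNorm
  gcongr
  simp only [dotProduct, Fintype.sum_sum_type, Function.comp_apply]
  exact le_add_of_nonneg_right (Finset.sum_nonneg fun _ _ => mul_self_nonneg _)

lemma abs_dotProduct_le_euclNorm_mul (v w : ι → ℝ) : |v ⬝ᵥ w| ≤ euclNorm v * euclNorm w := by
  simpa [euclNorm_eq_norm_toLp, EuclideanSpace.inner_eq_star_dotProduct, dotProduct_comm] using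
    abs_real_inner_le_norm (WithLp.toLp 2 v : EuclideanSpace ℝ ι) (WithLp.toLp 2 w)

end EuclideanNorm

section SpectralNorm

variable {ι κ : Type*} [Fintype ι] [Fintype κ] [DecidableEq κ]

lemma specNorm_eq_norm (A : Matrix ι κ ℝ) : specNorm A = ‖A‖ := rfl

lemma euclNorm_mulVec_le (A : Matrix ι κ ℝ) (v : κ → ℝ) :
    euclNorm (A *ᵥ v) ≤ ‖A‖ * euclNorm v := by
  simpa [euclNorm_eq_norm_toLp] using A.l2_opNorm_mulVec (WithLp.toLp 2 v)

lemma norm_le_of_euclNorm_mulVec_le {A : Matrix ι κ ℝ} {c : ℝ} (hc : 0 ≤ c)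
    (h : ∀ v, euclNorm (A *ᵥ v) ≤ c * euclNorm v) : ‖A‖ ≤ c :=
  ContinuousLinearMap.opNorm_le_bound _ hc fun x => by
    simpa [euclNorm_eq_norm_toLp, Matrix.toLpLin_apply] using h x.ofLp

lemma norm_fromBlocks_zero_le {o q : Type*} [Fintype o] [Fintype q] [DecidableEq q]
    (X : Matrix ι κ ℝ) : ‖fromBlocks X 0 0 (0 : Matrix o q ℝ)‖ ≤ ‖X‖ :=
  norm_le_of_euclNorm_mulVec_le (norm_nonneg X) fun v => calc
    euclNorm (fromBlocks X 0 0 (0 : Matrix o q ℝ) *ᵥ v) = euclNorm (X *ᵥ (v ∘ Sum.inl)) := by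
      simp [fromBlocks_mulVec, euclNorm_sumElim_zero]
    _ ≤ ‖X‖ * euclNorm (v ∘ Sum.inl) := euclNorm_mulVec_le X _
    _ ≤ ‖X‖ * euclNorm v := mul_le_mul_of_nonneg_left (euclNorm_comp_inl_le v) (norm_nonneg X)

lemma l2_opNorm_transpose [DecidableEq ι] (A : Matrix ι κ ℝ) : ‖Aᵀ‖ = ‖A‖ := by
  rw [← conjTranspose_eq_transpose_of_trivial, l2_opNorm_conjTranspose]

lemma norm_transpose_mul_self_sub_le [DecidableEq ι] (A B : Matrix ι κ ℝ) :
    ‖Aᵀ * A - Bᵀ * B‖ ≤ (‖A‖ + ‖B‖) * ‖A - B‖ := calc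
  ‖Aᵀ * A - Bᵀ * B‖ = ‖Aᵀ * (A - B) + (A - B)ᵀ * B‖ := by
    rw [Matrix.mul_sub, transpose_sub, Matrix.sub_mul]; abel_nf
  _ ≤ ‖Aᵀ‖ * ‖A - B‖ + ‖(A - B)ᵀ‖ * ‖B‖ :=
    (norm_add_le _ _).trans (add_le_add (l2_opNorm_mul _ _) (l2_opNorm_mul _ _))
  _ = (‖A‖ + ‖B‖) * ‖A - B‖ := by rw [l2_opNorm_transpose, l2_opNorm_transpose]; ring

variable {τ : Type*} [Fintype τ] [DecidableEq τ]

lemma norm_add_mul_transpose_mul_self_sub_le [DecidableEq ι] {C : Matrix ι κ ℝ}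
    {D : Matrix ι τ ℝ} {K K' : Matrix τ κ ℝ} {c d k δ : ℝ} (hC : ‖C‖ ≤ c) (hD : ‖D‖ ≤ d)
    (hK : ‖K‖ ≤ k) (hK' : ‖K'‖ ≤ k) (hδ : ‖K - K'‖ ≤ δ) :
    ‖(C + D * K)ᵀ * (C + D * K) - (C + D * K')ᵀ * (C + D * K')‖ ≤ 2 * (c + d * k) * (d * δ) := by
  have hd : 0 ≤ d := (norm_nonneg D).trans hD
  have hN : ∀ K : Matrix τ κ ℝ, ‖K‖ ≤ k → ‖C + D * K‖ ≤ c + d * k := fun K hK =>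
    (norm_add_le _ _).trans <|
      add_le_add hC <| (l2_opNorm_mul _ _).trans (mul_le_mul hD hK (norm_nonneg _) hd)
  calc _ ≤ (‖C + D * K‖ + ‖C + D * K'‖) * ‖(C + D * K) - (C + D * K')‖ :=
        norm_transpose_mul_self_sub_le _ _
    _ = (‖C + D * K‖ + ‖C + D * K'‖) * ‖D * (K - K')‖ := by
        rw [add_sub_add_left_eq_sub, Matrix.mul_sub]
    _ ≤ 2 * (c + d * k) * (d * δ) :=
        mul_le_mul (by linarith [hN K hK, hN K' hK'])
          ((l2_opNorm_mul _ _).trans (mul_le_mul hD hδ (norm_nonneg _) hd)) (norm_nonneg _)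
          (by linarith [(norm_nonneg _).trans (hN K hK)])

end SpectralNorm

lemma fromBlocks_sub_fromBlocks_same₂₂ {R ι κ o q : Type*} [AddGroup R] (A A' : Matrix ι κ R)
    (Z : Matrix o q R) : fromBlocks A 0 0 Z - fromBlocks A' 0 0 Z = fromBlocks (A - A') 0 0 0 := by
  rw [sub_eq_add_neg, fromBlocks_neg, fromBlocks_add]
  simp [sub_eq_add_neg]

section LambdaMax

variable {ι : Type*} [Fintype ι] [DecidableEq ι]

lemma dotProduct_mulVec_le_norm (A : Matrix ι ι ℝ) {v : ι → ℝ} (hv : euclNorm v = 1) :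
    v ⬝ᵥ (A *ᵥ v) ≤ ‖A‖ := calc
  v ⬝ᵥ (A *ᵥ v) ≤ euclNorm v * euclNorm (A *ᵥ v) :=
    (le_abs_self _).trans (abs_dotProduct_le_euclNorm_mul _ _)
  _ ≤ ‖A‖ := by simpa [hv] using euclNorm_mulVec_le A v

lemma dotProduct_mulVec_le_lambdaMax (A : Matrix ι ι ℝ) {v : ι → ℝ} (hv : euclNorm v = 1) :
    v ⬝ᵥ (A *ᵥ v) ≤ lambdaMax A :=
  le_csSup ⟨‖A‖, by rintro r ⟨w, hw, rfl⟩; exact dotProduct_mulVec_le_norm A hw⟩ ⟨v, hv, rfl⟩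

lemma lambdaMax_le_add_norm_sub (A B : Matrix ι ι ℝ) : lambdaMax A ≤ lambdaMax B + ‖A - B‖ := by
  rcases isEmpty_or_nonempty ι with hι | ⟨⟨i⟩⟩
  · rw [Subsingleton.elim A B, sub_self, norm_zero, add_zero]
  refine csSup_le ⟨_, Pi.single i 1, euclNorm_single i, rfl⟩ ?_
  rintro r ⟨v, hv, rfl⟩
  calc v ⬝ᵥ (A *ᵥ v) = v ⬝ᵥ (B *ᵥ v) + v ⬝ᵥ ((A - B) *ᵥ v) := by
        rw [sub_mulVec, dotProduct_sub]; ring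
    _ ≤ lambdaMax B + ‖A - B‖ :=
        add_le_add (dotProduct_mulVec_le_lambdaMax B hv) (dotProduct_mulVec_le_norm _ hv)

lemma abs_lambdaMax_sub_le_norm_sub (A B : Matrix ι ι ℝ) :
    |lambdaMax A - lambdaMax B| ≤ ‖A - B‖ :=
  abs_sub_le_iff.2 ⟨by linarith [lambdaMax_le_add_norm_sub A B],
    by linarith [lambdaMax_le_add_norm_sub B A, norm_sub_rev A B]⟩

end LambdaMax

theorem prop1_second_inequality_lipschitz_general
    (n m p l : ℕ) (E : Type*) [NormedAddCommGroup E] [NormedSpace ℝ E] (S : Set E)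
    (lam mu alpha : ℝ) (hlam : 0 < lam) (hmu : 0 < mu) (halpha : mu < alpha)
    (M : E → Matrix (Fin n) (Fin n) ℝ)
    (C : Matrix (Fin p) (Fin n) ℝ) (D : Matrix (Fin p) (Fin m) ℝ)
    (K : E → Matrix (Fin m) (Fin n) ℝ)
    (SC SD SK LM LK : ℝ)
    (hC : specNorm C ≤ SC) (hD : specNorm D ≤ SD)
    (hKb : ∀ s ∈ S, specNorm (K s) ≤ SK)
    (hMl : ∀ s ∈ S, ∀ t ∈ S, specNorm (M s - M t) ≤ LM * ‖s - t‖)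
    (hKl : ∀ s ∈ S, ∀ t ∈ S, specNorm (K s - K t) ≤ LK * ‖s - t‖)
    (G : E → Matrix (Fin n ⊕ Fin l) (Fin n ⊕ Fin l) ℝ)
    (hG : ∀ s, G s = Matrix.fromBlocks
        (lam • M s - alpha⁻¹ • ((C + D * K s)ᵀ * (C + D * K s))) 0 0
        ((alpha - mu) • (1 : Matrix (Fin l) (Fin l) ℝ))) :
    ∀ s ∈ S, ∀ t ∈ S,
      |lambdaMax (G s) - lambdaMax (G t)| ≤
        (lam * LM + (2 / alpha) * SC * SD * LK + (4 / alpha) * SK * SD ^ 2 * LK)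
          * ‖s - t‖ := by
  intro s hs t ht
  simp only [specNorm_eq_norm] at hC hD hKb hMl hKl
  have hα : 0 < alpha := hmu.trans halpha
  have hSK : 0 ≤ SK := (norm_nonneg _).trans (hKb s hs)
  have hLK : 0 ≤ LK * ‖s - t‖ := (norm_nonneg _).trans (hKl s hs t ht)
  set N : E → Matrix (Fin p) (Fin n) ℝ := fun u => C + D * K u
  calc |lambdaMax (G s) - lambdaMax (G t)| ≤ ‖G s - G t‖ := abs_lambdaMax_sub_le_norm_sub _ _
    _ ≤ ‖lam • (M s - M t) - alpha⁻¹ • ((N s)ᵀ * N s - (N t)ᵀ * N t)‖ := by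
        rw [hG s, hG t, fromBlocks_sub_fromBlocks_same₂₂, smul_sub, smul_sub, sub_sub_sub_comm]
        exact norm_fromBlocks_zero_le _
    _ ≤ lam * ‖M s - M t‖ + alpha⁻¹ * ‖(N s)ᵀ * N s - (N t)ᵀ * N t‖ := by
        refine (norm_sub_le _ _).trans_eq ?_
        rw [norm_smul, norm_smul, Real.norm_of_nonneg hlam.le,
          Real.norm_of_nonneg (inv_nonneg.2 hα.le)]
    _ ≤ lam * (LM * ‖s - t‖) + alpha⁻¹ * (2 * (SC + SD * SK) * (SD * (LK * ‖s - t‖))) :=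
        add_le_add (mul_le_mul_of_nonneg_left (hMl s hs t ht) hlam.le) <|
          mul_le_mul_of_nonneg_left (norm_add_mul_transpose_mul_self_sub_le hC hD (hKb s hs)
            (hKb t ht) (hKl s hs t ht)) (inv_nonneg.2 hα.le)
    _ = (lam * LM + (2 / alpha) * SC * SD * LK + (4 / alpha) * SK * SD ^ 2 * LK) * ‖s - t‖
          - 2 * alpha⁻¹ * SK * SD ^ 2 * (LK * ‖s - t‖) := by ring
    _ ≤ _ := sub_le_self _ (mul_nonneg (by positivity) hLK)

/-- Proposition 1 of the paper (second inequality): the largest eigenvalue of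
`G(s) = [[λM(s) - α⁻¹(C+DK(s))ᵀ(C+DK(s)), 0],[0, (α-μ)I]]` is Lipschitz on `S`
with constant `λ L_M + (2/α) S_C S_D L_K + (4/α) S_K S_D² L_K`. -/
theorem prop1_second_inequality_lipschitz
    (n m p l : ℕ) (E : Type*) [NormedAddCommGroup E] [NormedSpace ℝ E] (S : Set E)
    (lam mu alpha : ℝ) (hlam : 0 < lam) (hmu : 0 < mu) (halpha : mu < alpha)
    (M : E → Matrix (Fin n) (Fin n) ℝ) (hMsymm : ∀ s, (M s).IsSymm)
    (C : Matrix (Fin p) (Fin n) ℝ) (D : Matrix (Fin p) (Fin m) ℝ)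
    (K : E → Matrix (Fin m) (Fin n) ℝ)
    (SC SD SK LM LK : ℝ)
    (hC : specNorm C ≤ SC) (hD : specNorm D ≤ SD)
    (hKb : ∀ s ∈ S, specNorm (K s) ≤ SK)
    (hMl : ∀ s ∈ S, ∀ t ∈ S, specNorm (M s - M t) ≤ LM * ‖s - t‖)
    (hKl : ∀ s ∈ S, ∀ t ∈ S, specNorm (K s - K t) ≤ LK * ‖s - t‖)
    (G : E → Matrix (Fin n ⊕ Fin l) (Fin n ⊕ Fin l) ℝ)
    (hG : ∀ s, G s = Matrix.fromBlocks
        (lam • M s - alpha⁻¹ • ((C + D * K s)ᵀ * (C + D * K s))) 0 0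
        ((alpha - mu) • (1 : Matrix (Fin l) (Fin l) ℝ))) :
    ∀ s ∈ S, ∀ t ∈ S,
      |lambdaMax (G s) - lambdaMax (G t)| ≤
        (lam * LM + (2 / alpha) * SC * SD * LK + (4 / alpha) * SK * SD ^ 2 * LK)
          * ‖s - t‖ :=
  prop1_second_inequality_lipschitz_general n m p l E S lam mu alpha hlam hmu halpha M C D K SC SD
    SK LM LK hC hD hKb hMl hKl G hG
end
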